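/- arXiv:2405.18566 — 4 statements merged into one kernel-verified Lean document; each statement's English description precedes it below -/
import Mathlib

section
/- Let h = (v_1, ..., v_m) be a sequence of nodes with truck travel times t_R and drone travel times t_D. For indices i < j < k, define the operation cost t(o_{i,j,k}) = max( sum_{ℓ=i}^{j-2} t_R(v_ℓ, v_{ℓ+1}) + t_R(v_{j-1}, v_{j+1}) + sum_{ℓ=j+1}^{k-1} t_R(v_ℓ, v_{ℓ+1}), t_D(v_i, v_j) + t_D(v_j, v_k) ). If the drone is fast in operation o_{i,j,k}, i.e., t_D(v_i, v_j) + t_D(v_j, v_k) ≤ sum_{ℓ=i}^{j-2} t_R(v_ℓ, v_{ℓ+1}) + t_R(v_{j-1}, v_{j+1}) + sum_{ℓ=j+1}^{k-1} t_R(v_ℓ, v_{ℓ+1}), then for any i' ≤ i and k' ≥ k (with i' ≥ 1, k' ≤ m), we have t(o_{i',j,k'}) ≥ sum_{ℓ=i'}^{i-1} t_R(v_ℓ, v_{ℓ+1}) + t(o_{i,j,k}) + sum_{ℓ=k}^{k'-1} t_R(v_ℓ, v_{ℓ+1}). (This is Lemma: a fast operation dominates all operations with the same drone node, earlier launch, and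 later rendezvous.) -/
open Finset NNReal

/-- Cost of the truck path of operation `o_{i,j,k}`: follow the sequence from `v i`
to `v k`, skipping `v j` (going directly from `v (j-1)` to `v (j+1)`). -/
noncomputable def truckCost (tR : ℕ → ℕ → ℝ≥0) (v : ℕ → ℕ) (i j k : ℕ) : ℝ≥0 :=
  (∑ ℓ ∈ Finset.Ico i (j - 1), tR (v ℓ) (v (ℓ + 1))) + tR (v (j - 1)) (v (j + 1)) +
    ∑ ℓ ∈ Finset.Ico (j + 1) k, tR (v ℓ) (v (ℓ + 1))

/-- Cost of the drone path of operation `o_{i,j,k}`. -/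
noncomputable def droneCost (tD : ℕ → ℕ → ℝ≥0) (v : ℕ → ℕ) (i j k : ℕ) : ℝ≥0 :=
  tD (v i) (v j) + tD (v j) (v k)

/-- Cost of operation `o_{i,j,k}`. -/
noncomputable def opCost (tR tD : ℕ → ℕ → ℝ≥0) (v : ℕ → ℕ) (i j k : ℕ) : ℝ≥0 :=
  max (truckCost tR v i j k) (droneCost tD v i j k)

/-- Cost of a drone-free truck path from `v a` to `v b` following the sequence. -/
noncomputable def freeCost (tR : ℕ → ℕ → ℝ≥0) (v : ℕ → ℕ) (a b : ℕ) : ℝ≥0 :=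
  ∑ ℓ ∈ Finset.Ico a b, tR (v ℓ) (v (ℓ + 1))

/-- A fast operation dominates all operations with the same drone node, earlier
launch node, and later rendezvous node. -/
theorem fast_operation_dominates (m : ℕ) (v : ℕ → ℕ) (tR tD : ℕ → ℕ → ℝ≥0)
    (i j k i' k' : ℕ) (hi'1 : 1 ≤ i') (hi' : i' ≤ i) (hij : i < j) (hjk : j < k)
    (hk' : k ≤ k') (hk'm : k' ≤ m)
    (hfast : droneCost tD v i j k ≤ truckCost tR v i j k) :
    freeCost tR v i' i + opCost tR tD v i j k + freeCost tR v k k'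
      ≤ opCost tR tD v i' j k' := by
  have h1 : opCost tR tD v i j k = truckCost tR v i j k := max_eq_left hfast
  have ha : (∑ ℓ ∈ Finset.Ico i' i, tR (v ℓ) (v (ℓ+1))) + ∑ ℓ ∈ Finset.Ico i (j-1), tR (v ℓ) (v (ℓ+1))
      = ∑ ℓ ∈ Finset.Ico i' (j-1), tR (v ℓ) (v (ℓ+1)) :=
    Finset.sum_Ico_consecutive _ hi' (Nat.le_sub_one_of_lt hij)
  have hb : (∑ ℓ ∈ Finset.Ico (j+1) k, tR (v ℓ) (v (ℓ+1))) + ∑ ℓ ∈ Finset.Ico k k', tR (v ℓ) (v (ℓ+1))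
      = ∑ ℓ ∈ Finset.Ico (j+1) k', tR (v ℓ) (v (ℓ+1)) :=
    Finset.sum_Ico_consecutive _ hjk hk'
  have hsplit : truckCost tR v i' j k' =
      freeCost tR v i' i + truckCost tR v i j k + freeCost tR v k k' := by
    unfold truckCost freeCost
    rw [← ha, ← hb]; ring
  calc freeCost tR v i' i + opCost tR tD v i j k + freeCost tR v k k'
      = truckCost tR v i' j k' := by rw [h1, hsplit]
    _ ≤ opCost tR tD v i' j k' := le_max_left _ _
end

section
/- If the drone is fast in operation o_{i,j,j+1} (i.e., its drone cost t_D(v_i, v_j) + t_D(v_j, v_{j+1}) is at most its truck cost sum_{ℓ=i}^{j-2} t_R(v_ℓ, v_{ℓ+1}) + t_R(v_{j-1}, v_{j+1})), then o_{i,j,j+1} dominates every operation o_{i',j,k'} with the same drone node v_j, any launch index i' ≤ i, and any rendezvous index k' ≥ j+1. In particular, no operation with drone node v_j, launch index at most i, and rendezvous index at least j+1 other than o_{i,j,j+1} itself is needed to find an optimal solution. -/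
open Finset NNReal

/-- If the drone is fast in the operation `o_{i,j,j+1}` (smallest rendezvous index),
then it dominates every operation with the same drone node `v j`, launch index
`i' ≤ i` and rendezvous index `k' ≥ j + 1`. -/
theorem fast_smallest_rendezvous_dominates (v : ℕ → ℕ) (tR tD : ℕ → ℕ → ℝ≥0)
    (i j : ℕ) (hij : i < j)
    (hfast : droneCost tD v i j (j + 1) ≤ truckCost tR v i j (j + 1)) :
    ∀ i' k' : ℕ, i' ≤ i → j + 1 ≤ k' →
      freeCost tR v i' i + opCost tR tD v i j (j + 1) + freeCost tR v (j + 1) k'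
        ≤ opCost tR tD v i' j k' := by
  intro i' k' hi' hk'
  have h1 : opCost tR tD v i j (j + 1) = truckCost tR v i j (j + 1) :=
    max_eq_left hfast
  have hij1 : i ≤ j - 1 := Nat.le_sub_one_of_lt hij
  have key : freeCost tR v i' i + truckCost tR v i j (j + 1) + freeCost tR v (j + 1) k'
      = truckCost tR v i' j k' := by
    unfold freeCost truckCost
    rw [Finset.Ico_self, Finset.sum_empty, add_zero,
      ← Finset.sum_Ico_consecutive _ hi' hij1]
    ring
  rw [h1, key]
  exact le_max_left _ _
end

section
/- Given an optimal solution S* = ((r_1, d_1), ..., (r_s, d_s)) for the FSTSP in which each operation's truck path r_ℓ visits distinct nodes, consecutive operations share endpoints (the last node of r_ℓ equals the first node of r_{ℓ+1}), each customer is visited exactly once (either as a truck node in some r_ℓ or as the drone node of some d_ℓ), and the tour starts and ends at the depot, there exists a Hamiltonian cycle h over all nodes N such that S* respects h: the nodes visited by the truck appear in h in the same order, and each drone node appears in h strictly between its launch node and its rendezvous node. -/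
/-!
Insert each drone node right after the launch node of its operation and glue the resulting
node sequences together exactly as the truck route glues the truck paths, identifying the
shared endpoints. The result is a permutation of the truck route followed by the drone nodes,
so it visits every node once, runs from `0` to `n + 1` and contains the truck route as a
subsequence. Because consecutive operations share endpoints, the sequence of each operation
(launch node, drone node, rest of the truck path) occurs in it as a contiguous block, which
places every drone node between its launch and rendezvous nodes.
-/

/-- The truck route of a solution: concatenate the truck paths of its operations,
dropping the repeated shared endpoint at each junction. -/
def chainFlatten : List (List ℕ) → List ℕ
  | [] => []
  | r :: rest => r ++ (rest.map List.tail).flatten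

namespace List

variable {α β : Type*}

theorem getLast?_flatMap_congr {l : List α} {f g : α → List β}
    (h : ∀ a ∈ l, (f a).getLast? = (g a).getLast?) :
    (l.flatMap f).getLast? = (l.flatMap g).getLast? := by
  induction l with
  | nil => rfl
  | cons a l ih => simp_all [getLast?_append]

theorem idxOf_lt_idxOf_of_sublist [BEq α] [LawfulBEq α] {l : List α} {a b : α}
    (hl : l.Nodup) (hab : [a, b] <+ l) : l.idxOf a < l.idxOf b := by
  induction l with
  | nil => simp at hab
  | cons x l ih =>
    obtain ⟨hx, hl⟩ := nodup_cons.mp hl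
    rcases sublist_cons_iff.mp hab with hab | ⟨t, heq, ht⟩
    · have hxa : a ≠ x := fun h => hx (h ▸ hab.subset (by simp))
      have hxb : b ≠ x := fun h => hx (h ▸ hab.subset (by simp))
      simpa [idxOf_cons_ne _ (Ne.symm hxa), idxOf_cons_ne _ (Ne.symm hxb)] using ih hl hab
    · obtain ⟨rfl, rfl⟩ := cons_eq_cons.mp heq
      have hxb : b ≠ a := fun h => hx (h ▸ ht.subset (by simp))
      simp [idxOf_cons_ne _ (Ne.symm hxb)]

theorem mem_tail_of_getLast?_eq_some {l : List α} {a : α} (hl : 2 ≤ l.length)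
    (ha : l.getLast? = some a) : a ∈ l.tail :=
  match l, hl with
  | _ :: _ :: _, _ => mem_of_getLast? ha

end List

namespace FSTSP

open List

theorem chainFlatten_cons (r : List ℕ) (rest : List (List ℕ)) :
    chainFlatten (r :: rest) = r ++ rest.flatMap tail := rfl

theorem chainFlatten_cons_cons {r r' : List ℕ} (rest : List (List ℕ))
    (h : r.getLast? = r'.head?) :
    chainFlatten (r :: r' :: rest) = r.dropLast ++ chainFlatten (r' :: rest) := by
  simp only [chainFlatten_cons, flatMap_cons, ← append_assoc]
  congr 1
  cases r' with
  | nil => simp_all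
  | cons x t =>
    conv_lhs => rw [← dropLast_append_getLast? x h]
    simp

theorem infix_chainFlatten_of_mem :
    ∀ {L : List (List ℕ)}, IsChain (fun r r' => r.getLast? = r'.head?) L →
      ∀ r ∈ L, r <:+: chainFlatten L
  | [], _, _, hr => by simp at hr
  | a :: rest, hL, r, hr => by
    rcases mem_cons.mp hr with rfl | hr
    · exact (prefix_append _ _).isInfix
    cases rest with
    | nil => simp at hr
    | cons b rest =>
      rw [isChain_cons_cons] at hL
      rw [chainFlatten_cons_cons rest hL.1]
      exact (infix_chainFlatten_of_mem hL.2 r hr).trans (suffix_append _ _).isInfix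

section Operation

variable {α : Type*} (o : List α × Option α)

def operationNodes : List α := o.1.take 1 ++ o.2.toList ++ o.1.drop 1

theorem operationNodes_of_eq_cons {u j : α} {t : List α} (h₁ : o.1 = u :: t)
    (h₂ : o.2 = some j) : operationNodes o = u :: j :: t := by
  simp [operationNodes, h₁, h₂]

theorem operationNodes_perm : operationNodes o ~ o.1 ++ o.2.toList := by
  conv_rhs => rw [← take_append_drop 1 o.1]
  simp only [operationNodes, append_assoc]
  exact perm_append_comm.append_left _

theorem sublist_operationNodes : o.1 <+ operationNodes o := by
  conv_lhs => rw [← take_append_drop 1 o.1]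
  exact (sublist_append_left _ _).append (Sublist.refl _)

variable {o}

theorem head?_operationNodes (h : o.1 ≠ []) : (operationNodes o).head? = o.1.head? := by
  obtain ⟨u, t, ht⟩ := ne_nil_iff_exists_cons.mp h
  simp [operationNodes, ht]

theorem tail_operationNodes (h : o.1 ≠ []) :
    (operationNodes o).tail = o.2.toList ++ o.1.tail := by
  obtain ⟨u, t, ht⟩ := ne_nil_iff_exists_cons.mp h
  simp [operationNodes, ht]

theorem getLast?_operationNodes (h : 2 ≤ o.1.length) :
    (operationNodes o).getLast? = o.1.getLast? := by
  obtain ⟨u, v, t, ht⟩ : ∃ u v t, o.1 = u :: v :: t := by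
    match o.1, h with
    | u :: v :: t, _ => exact ⟨u, v, t, rfl⟩
  cases hd : o.2 <;> simp [operationNodes, ht, hd]

end Operation

def hamiltonianCycle (S : List (List ℕ × Option ℕ)) : List ℕ :=
  chainFlatten (S.map operationNodes)

section Cycle

variable {S : List (List ℕ × Option ℕ)}

theorem chainFlatten_map_fst_cons (a : List ℕ × Option ℕ)
    (rest : List (List ℕ × Option ℕ)) :
    chainFlatten ((a :: rest).map Prod.fst) = a.1 ++ rest.flatMap fun o => o.1.tail := by
  rw [map_cons, chainFlatten_cons, flatMap_map]

theorem hamiltonianCycle_cons {a : List ℕ × Option ℕ} {rest : List (List ℕ × Option ℕ)}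
    (h : ∀ o ∈ rest, o.1 ≠ []) :
    hamiltonianCycle (a :: rest) =
      operationNodes a ++ rest.flatMap fun o => o.2.toList ++ o.1.tail := by
  rw [hamiltonianCycle, map_cons, chainFlatten_cons, flatMap_map]
  exact congrArg _ (flatMap_congr fun o ho => tail_operationNodes (h o ho))

theorem hamiltonianCycle_perm (hS : ∀ o ∈ S, o.1 ≠ []) :
    hamiltonianCycle S ~ chainFlatten (S.map Prod.fst) ++ S.filterMap Prod.snd := by
  cases S with
  | nil => rfl
  | cons a rest =>
    rw [hamiltonianCycle_cons fun o ho => hS o (mem_cons_of_mem a ho), chainFlatten_map_fst_cons,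
      filterMap_eq_flatMap_toList, flatMap_cons]
    refine ((operationNodes_perm a).append
      ((flatMap_append_perm rest _ _).symm.trans perm_append_comm)).trans ?_
    simp only [append_assoc]
    exact (perm_append_comm_assoc _ _ _).append_left _

theorem sublist_hamiltonianCycle (hS : ∀ o ∈ S, o.1 ≠ []) :
    chainFlatten (S.map Prod.fst) <+ hamiltonianCycle S := by
  cases S with
  | nil => exact Sublist.slnil
  | cons a rest =>
    rw [hamiltonianCycle_cons fun o ho => hS o (mem_cons_of_mem a ho), chainFlatten_map_fst_cons]
    exact (sublist_operationNodes a).append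
      (Sublist.flatMap_right _ fun o _ => sublist_append_right _ _)

theorem head?_hamiltonianCycle (hS : ∀ o ∈ S, o.1 ≠ []) :
    (hamiltonianCycle S).head? = (chainFlatten (S.map Prod.fst)).head? := by
  cases S with
  | nil => rfl
  | cons a rest =>
    obtain ⟨u, t, ht⟩ := ne_nil_iff_exists_cons.mp (hS a mem_cons_self)
    simp [hamiltonianCycle, chainFlatten_cons, operationNodes, ht]

theorem getLast?_hamiltonianCycle (hS : ∀ o ∈ S, 2 ≤ o.1.length) :
    (hamiltonianCycle S).getLast? = (chainFlatten (S.map Prod.fst)).getLast? := by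
  have hne : ∀ o ∈ S, o.1 ≠ [] := fun o ho => ne_nil_of_length_pos (by grind)
  cases S with
  | nil => rfl
  | cons a rest =>
    rw [hamiltonianCycle_cons fun o ho => hne o (mem_cons_of_mem a ho), chainFlatten_map_fst_cons,
      getLast?_append, getLast?_append, getLast?_operationNodes (hS a mem_cons_self),
      getLast?_flatMap_congr fun o ho => getLast?_append_of_ne_nil _ ?_]
    exact ne_nil_of_length_pos (by grind)

theorem operationNodes_sublist_hamiltonianCycle
    (hchain : IsChain (fun o o' : List ℕ × Option ℕ => o.1.getLast? = o'.1.head?) S)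
    (hS : ∀ o ∈ S, 2 ≤ o.1.length) {o : List ℕ × Option ℕ} (ho : o ∈ S) :
    operationNodes o <+ hamiltonianCycle S := by
  have hchain' : IsChain (fun r r' : List ℕ => r.getLast? = r'.head?) (S.map operationNodes) :=
    (isChain_map _).mpr <| hchain.imp_of_mem_imp fun o o' ho ho' h => by
      rw [getLast?_operationNodes (hS o ho), head?_operationNodes, h]
      exact ne_nil_of_length_pos (by grind)
  exact (infix_chainFlatten_of_mem hchain' _ (mem_map_of_mem ho)).sublist

end Cycle

end FSTSP

open FSTSP List in
theorem exists_hamiltonian_cycle_respected_general (n : ℕ) (S : List (List ℕ × Option ℕ))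
    (hlen : ∀ o ∈ S, 2 ≤ o.1.length)
    (hchain : List.Chain' (fun o o' : List ℕ × Option ℕ => o.1.getLast? = o'.1.head?) S)
    (hstart : (chainFlatten (S.map Prod.fst)).head? = some 0)
    (hend : (chainFlatten (S.map Prod.fst)).getLast? = some (n + 1))
    (hcover : ∀ x, x ∈ chainFlatten (S.map Prod.fst) ++ S.filterMap Prod.snd ↔ x < n + 2)
    (honce : (chainFlatten (S.map Prod.fst) ++ S.filterMap Prod.snd).Nodup) :
    ∃ h : List ℕ,
      h.head? = some 0 ∧ h.getLast? = some (n + 1) ∧ h.Nodup ∧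
      (∀ x, x ∈ h ↔ x < n + 2) ∧
      (chainFlatten (S.map Prod.fst)).Sublist h ∧
      ∀ o ∈ S, ∀ j, o.2 = some j → ∀ u w, o.1.head? = some u → o.1.getLast? = some w →
        h.idxOf u < h.idxOf j ∧ h.idxOf j < h.idxOf w := by
  have hne : ∀ o ∈ S, o.1 ≠ [] := fun o ho => ne_nil_of_length_pos (by grind)
  have hperm := hamiltonianCycle_perm hne
  have hnodup := hperm.nodup_iff.mpr honce
  refine ⟨hamiltonianCycle S, (head?_hamiltonianCycle hne).trans hstart,
    (getLast?_hamiltonianCycle hlen).trans hend, hnodup, fun x => hperm.mem_iff.trans (hcover x),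
    sublist_hamiltonianCycle hne, ?_⟩
  intro o ho j hj u w hu hw
  obtain ⟨t, ht⟩ := head?_eq_some_iff.mp hu
  have hwt : w ∈ t := by simpa [ht] using mem_tail_of_getLast?_eq_some (hlen o ho) hw
  have hsub := operationNodes_sublist_hamiltonianCycle hchain hlen ho
  rw [operationNodes_of_eq_cons o ht hj] at hsub
  have huj : [u, j] <+ u :: j :: t := ((nil_sublist t).cons_cons j).cons_cons u
  have hjw : [j, w] <+ u :: j :: t := ((singleton_sublist.mpr hwt).cons_cons j).cons u
  exact ⟨idxOf_lt_idxOf_of_sublist hnodup (huj.trans hsub),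
    idxOf_lt_idxOf_of_sublist hnodup (hjw.trans hsub)⟩

/-- Given an optimal (indeed, any) solution `S` for the FSTSP in which each truck
path visits distinct nodes, consecutive operations share endpoints, each customer is
visited exactly once, and the tour starts at the depot `0` and ends at the depot
copy `n+1`, there is a Hamiltonian cycle `h` over `N = {0, …, n+1}` that `S`
respects: the truck nodes occur in `h` in the same order, and each drone node lies
in `h` strictly between its launch and rendezvous nodes. -/
theorem exists_hamiltonian_cycle_respected (n : ℕ) (S : List (List ℕ × Option ℕ))
    (hne : S ≠ [])
    (hlen : ∀ o ∈ S, 2 ≤ o.1.length)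
    (hdistinct : ∀ o ∈ S, o.1.Nodup)
    (hchain : List.Chain' (fun o o' : List ℕ × Option ℕ => o.1.getLast? = o'.1.head?) S)
    (hstart : (chainFlatten (S.map Prod.fst)).head? = some 0)
    (hend : (chainFlatten (S.map Prod.fst)).getLast? = some (n + 1))
    (hdrone : ∀ o ∈ S, ∀ j, o.2 = some j → 1 ≤ j ∧ j ≤ n)
    (hcover : ∀ x, x ∈ chainFlatten (S.map Prod.fst) ++ S.filterMap Prod.snd ↔ x < n + 2)
    (honce : (chainFlatten (S.map Prod.fst) ++ S.filterMap Prod.snd).Nodup) :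
    ∃ h : List ℕ,
      h.head? = some 0 ∧ h.getLast? = some (n + 1) ∧ h.Nodup ∧
      (∀ x, x ∈ h ↔ x < n + 2) ∧
      (chainFlatten (S.map Prod.fst)).Sublist h ∧
      ∀ o ∈ S, ∀ j, o.2 = some j → ∀ u w, o.1.head? = some u → o.1.getLast? = some w →
        h.idxOf u < h.idxOf j ∧ h.idxOf j < h.idxOf w :=
  exists_hamiltonian_cycle_respected_general n S hlen hchain hstart hend hcover honce
end

section
/- Shortest-path characterization of the Split Algorithm: build a weighted digraph G on vertices {0, 1, ..., n+1} where for each pair i < k the arc (i, k) has weight w(i,k) = min( sum_{ℓ=i}^{k-1} t_R(v_ℓ, v_{ℓ+1}), min_{i < j < k} t(o_{i,j,k}) ) (where the inner min is taken over drone nodes j, and is omitted when k = i+1 gives only the truck option for j nonexistent). Then the weight of a shortest path from 0 to n+1 in G equals the minimum cost over all solutions of the h-FSTSP that respect h and use at most one drone delivery per operation. -/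
open Finset NNReal

/-- An operation over an interval `[a, b]` of indices of the cycle, with an optional
drone node index `j` (with `a < j < b`). -/
abbrev Operation := ℕ × ℕ × Option ℕ

/-- Cost of an operation: truck-only cost if no drone node, else `t(o_{a,j,b})`. -/
noncomputable def operationCost (tR tD : ℕ → ℕ → ℝ≥0) (v : ℕ → ℕ) : Operation → ℝ≥0
  | (a, b, none) => freeCost tR v a b
  | (a, b, some j) => opCost tR tD v a j b

/-- Total cost of a solution (a list of operations). -/
noncomputable def solCost (tR tD : ℕ → ℕ → ℝ≥0) (v : ℕ → ℕ) (sol : List Operation) : ℝ≥0 :=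
  (sol.map (operationCost tR tD v)).sum

/-- A feasible solution respecting the cycle `(v 0, …, v (n+1))`: a nonempty chain of
operations over consecutive intervals partitioning `[0, n+1]`, each drone node lying
strictly inside its interval. -/
def Feasible (n : ℕ) (sol : List Operation) : Prop :=
  sol ≠ [] ∧
  (sol.head?.map Prod.fst) = some 0 ∧
  (sol.getLast?.map (fun o => o.2.1)) = some (n + 1) ∧
  List.Chain' (fun o o' => o.2.1 = o'.1) sol ∧
  ∀ o ∈ sol, o.1 < o.2.1 ∧ ∀ j, o.2.2 = some j → o.1 < j ∧ j < o.2.1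

/-- Arc weight of the Split Algorithm digraph for arc `(i, k)`: the minimum of the
truck-only cost and the best operation cost over drone nodes `j` with `i < j < k`
(omitted when no such `j` exists). -/
noncomputable def arcWeight (tR tD : ℕ → ℕ → ℝ≥0) (v : ℕ → ℕ) (i k : ℕ) : ℝ≥0 :=
  if h : (Finset.Ioo i k).Nonempty then
    min (freeCost tR v i k) ((Finset.Ioo i k).inf' h fun j => opCost tR tD v i j k)
  else freeCost tR v i k

/-- A path from `0` to `n+1` in the digraph on `{0, …, n+1}` using arcs `(i, k)` with
`i < k`, given by its (strictly increasing) list of vertices. -/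
def PathOK (n : ℕ) (c : List ℕ) : Prop :=
  c.head? = some 0 ∧ c.getLast? = some (n + 1) ∧ List.Chain' (· < ·) c

/-- The weight of a path: the sum of the weights of its arcs. -/
noncomputable def pathWeight (w : ℕ → ℕ → ℝ≥0) (c : List ℕ) : ℝ≥0 :=
  ((c.zip c.tail).map fun p => w p.1 p.2).sum

/-!
Solutions and paths correspond operation by arc. A solution yields the path through the
endpoints of its operations, and each operation costs at least the weight of its arc, which is
a minimum over all operations on that interval. Conversely, a path yields a solution by taking
on each arc an operation attaining the arc weight. Hence every value of either set is bounded
below by a value of the other, and the two infima agree.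
-/

namespace List

variable {α : Type*}

theorem isChain_iff_forall_mem_zip_tail {R : α → α → Prop} {l : List α} :
    l.IsChain R ↔ ∀ p ∈ l.zip l.tail, R p.1 p.2 := by
  induction l using twoStepInduction <;> simp_all

theorem isChain_zip_tail : ∀ l : List α, (l.zip l.tail).IsChain fun p q => p.2 = q.1
  | [] | [_] | [_, _] => by simp
  | _ :: y :: z :: l => isChain_cons_cons.mpr ⟨rfl, isChain_zip_tail (y :: z :: l)⟩

end List

section SplitDigraph

variable (tR tD : ℕ → ℕ → ℝ≥0) (v : ℕ → ℕ)

/-- The drone node of a cheapest operation over `[a, b]`, or `none` if the truck alone is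
cheapest. -/
noncomputable def bestDrone (a b : ℕ) : Option ℕ :=
  if h : (Ioo a b).Nonempty then
    if freeCost tR v a b ≤ (Ioo a b).inf' h (opCost tR tD v a · b) then none
    else some (exists_mem_eq_inf' h (opCost tR tD v a · b)).choose
  else none

noncomputable def solOfPath (c : List ℕ) : List Operation :=
  (c.zip c.tail).map fun p => (p.1, p.2, bestDrone tR tD v p.1 p.2)

def endpoints (a : ℕ) (sol : List Operation) : List ℕ :=
  a :: sol.map (·.2.1)

variable {tR tD v}

theorem mem_Ioo_of_bestDrone_eq_some {a b j : ℕ} (hj : bestDrone tR tD v a b = some j) :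
    j ∈ Ioo a b := by
  unfold bestDrone at hj
  split_ifs at hj with h
  exact Option.some_injective _ hj ▸ (exists_mem_eq_inf' h _).choose_spec.1

theorem operationCost_bestDrone (a b : ℕ) :
    operationCost tR tD v (a, b, bestDrone tR tD v a b) = arcWeight tR tD v a b := by
  unfold bestDrone arcWeight
  split_ifs with h hle
  · simp [operationCost, hle]
  · simp only [operationCost]
    rw [← (exists_mem_eq_inf' h (opCost tR tD v a · b)).choose_spec.2,
      min_eq_right (le_of_not_ge hle)]
  · rfl

theorem arcWeight_le_operationCost {a b : ℕ} {oj : Option ℕ}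
    (hoj : ∀ j, oj = some j → a < j ∧ j < b) :
    arcWeight tR tD v a b ≤ operationCost tR tD v (a, b, oj) := by
  unfold arcWeight
  cases oj with
  | none => split_ifs <;> simp [operationCost]
  | some j =>
    have hj : j ∈ Ioo a b := mem_Ioo.mpr (hoj j rfl)
    rw [dif_pos ⟨j, hj⟩]
    exact (min_le_right _ _).trans (inf'_le _ hj)

theorem solCost_solOfPath (c : List ℕ) :
    solCost tR tD v (solOfPath tR tD v c) = pathWeight (arcWeight tR tD v) c := by
  simp [solCost, solOfPath, pathWeight, Function.comp_def, operationCost_bestDrone]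

theorem PathOK.feasible_solOfPath {n : ℕ} {c : List ℕ} (h : PathOK n c) :
    Feasible n (solOfPath tR tD v c) := by
  obtain ⟨hhead, hlast, hchain⟩ := h
  obtain ⟨y, t, rfl⟩ : ∃ y t, c = 0 :: y :: t := by
    rcases c with _ | ⟨_, _ | ⟨y, t⟩⟩ <;> simp_all
  have hends : (solOfPath tR tD v (0 :: y :: t)).map (·.2.1) = y :: t := by
    rw [solOfPath, List.map_map]
    exact List.map_snd_zip (by simp)
  refine ⟨by simp [solOfPath], by simp [solOfPath], ?_, ?_, ?_⟩
  · rwa [← List.getLast?_map, hends, ← List.getLast?_cons_cons]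
  · exact (List.isChain_map _).2 ((List.isChain_zip_tail _).imp fun _ _ h => h)
  · simp only [solOfPath, List.mem_map]
    rintro _ ⟨p, hp, rfl⟩
    exact ⟨List.isChain_iff_forall_mem_zip_tail.mp hchain p hp,
      fun j hj => mem_Ioo.mp (mem_Ioo_of_bestDrone_eq_some hj)⟩

theorem zip_tail_endpoints_eq_map {a : ℕ} {sol : List Operation}
    (hchain : sol.IsChain fun o o' => o.2.1 = o'.1) (hhead : ∀ o ∈ sol.head?, o.1 = a) :
    (endpoints a sol).zip (endpoints a sol).tail = sol.map fun o => (o.1, o.2.1) := by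
  induction sol generalizing a with
  | nil => rfl
  | cons o sol ih =>
    obtain ⟨hrel, hchain⟩ := List.isChain_cons.mp hchain
    simp only [List.head?_cons, Option.mem_some_iff, forall_eq'] at hhead
    simp only [endpoints, List.map_cons, List.tail_cons, List.zip_cons_cons] at ih ⊢
    rw [ih hchain fun o' ho' => (hrel o' ho').symm, hhead]

theorem Feasible.zip_tail_endpoints {n : ℕ} {sol : List Operation} (h : Feasible n sol) :
    (endpoints 0 sol).zip (endpoints 0 sol).tail = sol.map fun o => (o.1, o.2.1) :=
  zip_tail_endpoints_eq_map h.2.2.2.1 fun o ho => by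
    simpa [show sol.head? = some o from ho] using h.2.1

theorem Feasible.pathOK_endpoints {n : ℕ} {sol : List Operation} (h : Feasible n sol) :
    PathOK n (endpoints 0 sol) := by
  refine ⟨rfl, ?_, ?_⟩
  · obtain ⟨o, sol, rfl⟩ := List.exists_cons_of_ne_nil h.1
    have hlast := h.2.2.1
    rw [← List.getLast?_map, List.map_cons] at hlast
    rwa [endpoints, List.map_cons, List.getLast?_cons_cons]
  · show List.IsChain _ _
    rw [List.isChain_iff_forall_mem_zip_tail, h.zip_tail_endpoints]
    simp only [List.forall_mem_map]
    exact fun o ho => (h.2.2.2.2 o ho).1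

theorem Feasible.pathWeight_endpoints_le {n : ℕ} {sol : List Operation} (h : Feasible n sol) :
    pathWeight (arcWeight tR tD v) (endpoints 0 sol) ≤ solCost tR tD v sol := by
  rw [pathWeight, h.zip_tail_endpoints, List.map_map, solCost]
  exact List.sum_le_sum fun o ho => arcWeight_le_operationCost (h.2.2.2.2 o ho).2

end SplitDigraph

/-- Shortest-path characterization of the Split Algorithm: the shortest 0-to-(n+1)
path weight in the Split digraph equals the minimum cost of a solution of the
h-FSTSP respecting `h` with at most one drone delivery per operation. -/
theorem split_shortest_path_eq_min_solution (n : ℕ) (v : ℕ → ℕ) (tR tD : ℕ → ℕ → ℝ≥0) :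
    sInf {x : ℝ≥0 | ∃ c, PathOK n c ∧ pathWeight (arcWeight tR tD v) c = x}
      = sInf {x : ℝ≥0 | ∃ sol, Feasible n sol ∧ solCost tR tD v sol = x} := by
  refine csInf_eq_csInf_of_forall_exists_le ?_ ?_
  · rintro _ ⟨c, hc, rfl⟩
    exact ⟨_, ⟨_, hc.feasible_solOfPath, rfl⟩, (solCost_solOfPath c).le⟩
  · rintro _ ⟨sol, hsol, rfl⟩
    exact ⟨_, ⟨_, hsol.pathOK_endpoints, rfl⟩, hsol.pathWeight_endpoints_le⟩
end
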